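/- Fix real numbers p, q, r, s, t, u and let g be the smooth Riemannian metric with components g_{11} = (ry² + 2qy + u)/Δ², g_{12} = g_{21} = −(rxy + qx + py + t)/Δ², g_{22} = (rx² + 2px + s)/Δ², Δ := (rx² + 2px + s)(ry² + 2qy + u) − (rxy + qx + py + t)², defined on the open set U ⊆ ℝ² where this form is positive definite. Then the unparameterised geodesics of g are straight lines: for every smooth curve γ : I → U with nowhere-vanishing velocity satisfying γ''^c + Γ_{ab}{}^c(γ) γ'^a γ'^b ∈ ℝ∙γ' pointwise (where Γ_{ab}{}^c are the Levi-Civita Christoffel symbols of g), the image of γ is contained in an affine line of ℝ². -/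

import Mathlib

noncomputable section

/-- The plane ℝ², as `Fin 2 → ℝ`. -/
abbrev E2 : Type := Fin 2 → ℝ

/-- The standard basis vectors of ℝ². -/
def bas (a : Fin 2) : E2 := Pi.single a 1

/-- Partial derivative ∂ₐ of a scalar function on ℝ². -/
def pd (a : Fin 2) (f : E2 → ℝ) (x : E2) : ℝ := fderiv ℝ f x (bas a)

/-- Components Γ_{ab}{}^c of a Christoffel map Γ : ℝ² → (ℝ² →ₗ ℝ² →ₗ ℝ²). -/
def chr (Γ : E2 → (E2 →ₗ[ℝ] E2 →ₗ[ℝ] E2)) (a b c : Fin 2) (x : E2) : ℝ :=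
  Γ x (bas a) (bas b) c

/-- Ricci tensor components built from Christoffel components `Γc a b c` (= Γ_{ab}{}^c):
`R_{ad} = ∂_cΓ_{ad}{}^c − ∂_aΓ_{cd}{}^c + Γ_{cb}{}^cΓ_{ad}{}^b − Γ_{ab}{}^cΓ_{cd}{}^b`. -/
def ricciC (Γc : Fin 2 → Fin 2 → Fin 2 → E2 → ℝ) (a d : Fin 2) (x : E2) : ℝ :=
  (∑ c, pd c (Γc a d c) x) - (∑ c, pd a (Γc c d c) x)
  + (∑ b, ∑ c, Γc c b c x * Γc a d b x)
  - (∑ b, ∑ c, Γc a b c x * Γc c d b x)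

/-- Covariant derivative of the Ricci tensor:
`∇_aR_{bc} = ∂_aR_{bc} − Γ_{ab}{}^dR_{dc} − Γ_{ac}{}^dR_{bd}`. -/
def covRicciC (Γc : Fin 2 → Fin 2 → Fin 2 → E2 → ℝ) (a b c : Fin 2) (x : E2) : ℝ :=
  pd a (ricciC Γc b c) x - (∑ d, Γc a b d x * ricciC Γc d c x)
    - (∑ d, Γc a c d x * ricciC Γc b d x)

/-- `Y_{abc} = ∇_aR_{bc} − ∇_bR_{ac}`. -/
def YC (Γc : Fin 2 → Fin 2 → Fin 2 → E2 → ℝ) (a b c : Fin 2) (x : E2) : ℝ :=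
  covRicciC Γc a b c x - covRicciC Γc b a c x

/-- Levi-Civita Christoffel symbols of a metric `g` (matrix-valued map):
`Γ_{ab}{}^c = ½ g^{cd}(∂_a g_{bd} + ∂_b g_{ad} − ∂_d g_{ab})`. -/
def chrLC (g : E2 → Matrix (Fin 2) (Fin 2) ℝ) (a b c : Fin 2) (x : E2) : ℝ :=
  (1/2) * ∑ d, (g x)⁻¹ c d *
    (pd a (fun y => g y b d) x + pd b (fun y => g y a d) x - pd d (fun y => g y a b) x)

/-- Gaussian curvature `K = ½ g^{ab} R_{ab}` of a metric on an open subset of ℝ². -/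
def gauss (g : E2 → Matrix (Fin 2) (Fin 2) ℝ) (x : E2) : ℝ :=
  (1/2) * ∑ a, ∑ b, (g x)⁻¹ a b * ricciC (chrLC g) a b x

/-- The six-parameter Liouville family of metrics
`((ry²+2qy+u)dx² − 2(rxy+qx+py+t)dx dy + (rx²+2px+s)dy²)/Δ²`, where
`Δ = (rx²+2px+s)(ry²+2qy+u) − (rxy+qx+py+t)²`. -/
def liouville (p q r s t u : ℝ) : E2 → Matrix (Fin 2) (Fin 2) ℝ := fun z =>
  let x := z 0
  let y := z 1
  let Δ : ℝ := (r*x^2 + 2*p*x + s) * (r*y^2 + 2*q*y + u) - (r*x*y + q*x + p*y + t)^2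
  Matrix.of
    ![![(r*y^2 + 2*q*y + u) / Δ^2, -(r*x*y + q*x + p*y + t) / Δ^2],
      ![-(r*x*y + q*x + p*y + t) / Δ^2, (r*x^2 + 2*p*x + s) / Δ^2]]

-- generic: function with zero derivative on Ioo is constant there
lemma const_of_deriv0 {F : Type*} [NormedAddCommGroup F] [NormedSpace ℝ F]
    {f : ℝ → F} {a b : ℝ} (h : ∀ τ ∈ Set.Ioo a b, HasDerivAt f 0 τ)
    {x y : ℝ} (hx : x ∈ Set.Ioo a b) (hy : y ∈ Set.Ioo a b) : f x = f y := by
  have hsr : (ContinuousLinearMap.smulRight (1 : ℝ →L[ℝ] ℝ) (0 : F)) = 0 := by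
    ext x; simp
  have hb := (convex_Ioo a b).norm_image_sub_le_of_norm_hasFDerivWithin_le
    (C := 0) (f' := fun _ => (0 : ℝ →L[ℝ] F))
    (fun τ hτ => by
      have h0 : HasFDerivAt f (0 : ℝ →L[ℝ] F) τ := hsr ▸ (h τ hτ).hasFDerivAt
      exact h0.hasFDerivWithinAt)
    (fun τ hτ => by simp) hy hx
  have h0 : ‖f x - f y‖ ≤ 0 := by simpa using hb
  have h1 : f x - f y = 0 := by
    simpa using le_antisymm h0 (norm_nonneg _)
  exact sub_eq_zero.mp h1

-- extract components: HasDerivAt for a component of a curve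
lemma hasDerivAt_comp_proj {f : ℝ → E2} {f' : E2} {τ : ℝ} (h : HasDerivAt f f' τ) (i : Fin 2) :
    HasDerivAt (fun σ => f σ i) (f' i) τ := by
  have := (ContinuousLinearMap.proj (R := ℝ) (φ := fun _ : Fin 2 => ℝ) i).hasFDerivAt.comp_hasDerivAt τ h
  exact this

section main
variable {a b : ℝ} {γ : ℝ → E2}

theorem lines (hγ : ContDiffOn ℝ (⊤ : ℕ∞) γ (Set.Ioo a b)) (hab : a < b)
    (hvne : ∀ τ ∈ Set.Ioo a b, deriv γ τ ≠ 0)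
    (hspan : ∀ τ ∈ Set.Ioo a b, deriv (deriv γ) τ ∈ Submodule.span ℝ {deriv γ τ}) :
    ∃ (pt v : E2), v ≠ 0 ∧ ∀ τ ∈ Set.Ioo a b, ∃ σ : ℝ, γ τ = pt + σ • v := by
  set I := Set.Ioo a b with hI
  have hIopen : IsOpen I := isOpen_Ioo
  set v : ℝ → E2 := deriv γ with hv
  -- γ and v are differentiable with HasDerivAt on I
  have hγ' : ∀ τ ∈ I, HasDerivAt γ (v τ) τ := fun τ hτ =>
    ((hγ.contDiffAt (hIopen.mem_nhds hτ)).differentiableAt (by simp)).hasDerivAt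
  have hvCD : ContDiffOn ℝ (⊤ : ℕ∞) v I := hγ.deriv_of_isOpen hIopen (by simp)
  have hv' : ∀ τ ∈ I, HasDerivAt v (deriv v τ) τ := fun τ hτ =>
    ((hvCD.contDiffAt (hIopen.mem_nhds hτ)).differentiableAt (by simp)).hasDerivAt
  set Q : ℝ → ℝ := fun τ => v τ 0 ^ 2 + v τ 1 ^ 2 with hQdef
  set N : ℝ → ℝ := fun τ => Real.sqrt (Q τ) with hNdef
  set w : ℝ → E2 := fun τ => (N τ)⁻¹ • v τ with hwdef
  have hQpos : ∀ τ ∈ I, 0 < Q τ := by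
    intro τ hτ
    rcases Function.ne_iff.1 (hvne τ hτ) with ⟨i, hi⟩
    simp only [Pi.zero_apply] at hi
    fin_cases i <;> simp only [Fin.mk_zero, Fin.mk_one, Fin.isValue] at hi <;> positivity
  have hNpos : ∀ τ ∈ I, 0 < N τ := fun τ hτ => Real.sqrt_pos.2 (hQpos τ hτ)
  have hNsq : ∀ τ ∈ I, N τ ^ 2 = Q τ := fun τ hτ => Real.sq_sqrt (hQpos τ hτ).le
  -- w has zero derivative
  have hw' : ∀ τ ∈ I, HasDerivAt w 0 τ := by
    intro τ hτ
    obtain ⟨lam, hlam⟩ := Submodule.mem_span_singleton.1 (hspan τ hτ)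
    have hvd := hv' τ hτ
    rw [← hlam] at hvd
    have hv0 := hasDerivAt_comp_proj hvd 0
    have hv1 := hasDerivAt_comp_proj hvd 1
    simp only [Pi.smul_apply, smul_eq_mul] at hv0 hv1
    have hQ' : HasDerivAt Q (2 * lam * Q τ) τ := by
      have := ((hv0.pow 2).add (hv1.pow 2))
      refine this.congr_deriv (Eq.symm ?_)
      simp [hQdef]; ring
    have hN' : HasDerivAt N (lam * N τ) τ := by
      have := (Real.hasDerivAt_sqrt (hQpos τ hτ).ne').comp τ hQ'
      refine this.congr_deriv (Eq.symm ?_)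
      have hNne : N τ ≠ 0 := (hNpos τ hτ).ne'
      rw [show (1:ℝ) / (2 * Real.sqrt (Q τ)) * (2 * lam * Q τ)
            = lam * Q τ / Real.sqrt (Q τ) from by ring,
        show Real.sqrt (Q τ) = N τ from rfl,
        show Q τ = N τ ^ 2 from (hNsq τ hτ).symm]
      field_simp
    have hNne : N τ ≠ 0 := (hNpos τ hτ).ne'
    have := (hN'.inv hNne).smul hvd
    refine this.congr_deriv (Eq.symm ?_)
    funext i
    simp only [Pi.add_apply, Pi.smul_apply, smul_eq_mul, Pi.zero_apply]
    simp only [Pi.inv_apply]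
    field_simp
    ring
  -- w is constant
  set τ0 : ℝ := (a + b) / 2 with hτ0def
  have hτ0 : τ0 ∈ I := by constructor <;> simp [hτ0def] <;> linarith
  have hwconst : ∀ τ ∈ I, w τ = w τ0 := fun τ hτ => const_of_deriv0 hw' hτ hτ0
  have hvw : ∀ τ ∈ I, v τ = N τ • w τ0 := by
    intro τ hτ
    rw [← hwconst τ hτ, hwdef]
    simp only
    rw [smul_smul, mul_inv_cancel₀ (hNpos τ hτ).ne', one_smul]
  have hw0ne : w τ0 ≠ 0 := by
    intro h0
    apply hvne τ0 hτ0
    rw [hvw τ0 hτ0, h0, smul_zero]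
  -- the cross function is constant
  set G : ℝ → ℝ := fun τ => w τ0 1 * γ τ 0 - w τ0 0 * γ τ 1 with hGdef
  have hG' : ∀ τ ∈ I, HasDerivAt G 0 τ := by
    intro τ hτ
    have h0 := hasDerivAt_comp_proj (hγ' τ hτ) 0
    have h1 := hasDerivAt_comp_proj (hγ' τ hτ) 1
    have := ((h0.const_mul (w τ0 1)).sub (h1.const_mul (w τ0 0)))
    refine this.congr_deriv (Eq.symm ?_)
    rw [hvw τ hτ]
    simp only [Pi.smul_apply, smul_eq_mul]
    ring
  have hGconst : ∀ τ ∈ I, G τ = G τ0 := fun τ hτ => const_of_deriv0 hG' hτ hτ0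
  refine ⟨γ τ0, w τ0, hw0ne, ?_⟩
  intro τ hτ
  have hcross := hGconst τ hτ
  simp only [hGdef] at hcross
  by_cases hw0 : w τ0 0 = 0
  · have hw1 : w τ0 1 ≠ 0 := by
      intro h1
      apply hw0ne
      funext i; fin_cases i <;> simp [hw0, h1]
    refine ⟨(γ τ 1 - γ τ0 1) / w τ0 1, ?_⟩
    funext i
    fin_cases i <;> simp only [Fin.mk_zero, Fin.mk_one, Fin.isValue, Pi.add_apply, Pi.smul_apply, smul_eq_mul]
    · rw [hw0] at hcross ⊢
      have : w τ0 1 * γ τ 0 = w τ0 1 * γ τ0 0 := by linarith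
      have := mul_left_cancel₀ hw1 this
      simpa [this]
    · field_simp
      ring
  · refine ⟨(γ τ 0 - γ τ0 0) / w τ0 0, ?_⟩
    funext i
    fin_cases i <;> simp only [Fin.mk_zero, Fin.mk_one, Fin.isValue, Pi.add_apply, Pi.smul_apply, smul_eq_mul]
    · field_simp
      ring
    · field_simp
      linarith [hcross]

/-- the unparameterised geodesics of the Liouville metric are straight lines:
every unparameterised geodesic has image contained in an affine line of ℝ². -/
def Af (q r u : ℝ) (z : E2) : ℝ := r * z 1 ^ 2 + 2*q*z 1 + u
def Bf (p r s : ℝ) (z : E2) : ℝ := r * z 0 ^ 2 + 2*p*z 0 + s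
def Cf (p q r t : ℝ) (z : E2) : ℝ := r * z 0 * z 1 + q * z 0 + p * z 1 + t
def Df (p q r s t u : ℝ) (z : E2) : ℝ := Bf p r s z * Af q r u z - (Cf p q r t z)^2

-- test: coordinate evaluation of z + τ • bas a
example (z : E2) (τ : ℝ) : (z + τ • bas 0) 0 = z 0 + τ := by
  simp [bas]
example (z : E2) (τ : ℝ) : (z + τ • bas 0) 1 = z 1 := by
  simp [bas, Pi.single_eq_of_ne]
-- differentiability of coordinates
example (z : E2) : DifferentiableAt ℝ (fun w : E2 => Af 1 2 3 w) z := by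
  unfold Af; fun_prop

lemma hasDerivAt_quad (c2 c1 c0 : ℝ) :
    HasDerivAt (fun τ : ℝ => c2*τ^2 + c1*τ + c0) c1 0 := by
  have h : HasDerivAt (fun τ : ℝ => c2*τ^2 + c1*τ + c0) (c2*(2*0^1)+ (c1*1) + 0) 0 := by
    apply HasDerivAt.add
    apply HasDerivAt.add
    · exact (hasDerivAt_pow 2 0).const_mul c2
    · exact (hasDerivAt_id 0).const_mul c1
    · exact hasDerivAt_const 0 c0
  simpa using h

lemma pd_rat (F G : E2 → ℝ) (z : E2) (a : Fin 2) (f2 f1 f0 g2 g1 g0 : ℝ)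
    (hF : ∀ τ : ℝ, F (z + τ • bas a) = f2*τ^2 + f1*τ + f0)
    (hG : ∀ τ : ℝ, G (z + τ • bas a) = g2*τ^2 + g1*τ + g0)
    (hg0 : g0 ≠ 0)
    (hFd : DifferentiableAt ℝ F z) (hGd : DifferentiableAt ℝ G z) :
    pd a (fun w => F w / G w ^ 2) z = (f1 * g0 - 2 * f0 * g1) / g0 ^ 3 := by
  have hz0 : z + (0:ℝ) • bas a = z := by simp
  have hGz : G z ≠ 0 := by
    have := hG 0; rw [hz0] at this; simpa [this]
  have hG2 : DifferentiableAt ℝ (fun w => G w ^ 2) z := hGd.pow 2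
  have hGz2 : (fun w => G w ^ 2) z ≠ 0 := pow_ne_zero 2 hGz
  have hdiff : DifferentiableAt ℝ (fun w => F w / G w ^ 2) z := by
    simp only [div_eq_mul_inv]
    exact hFd.mul (hG2.inv hGz2)
  have hline : HasDerivAt (fun τ : ℝ => z + τ • bas a) (bas a) 0 := by
    simpa using ((hasDerivAt_id (0:ℝ)).smul_const (bas a)).const_add z
  have hcomp : HasDerivAt (fun τ : ℝ => F (z + τ • bas a) / G (z + τ • bas a) ^ 2)
      (fderiv ℝ (fun w => F w / G w ^ 2) z (bas a)) 0 := by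
    have h2 : HasFDerivAt (fun w => F w / G w ^ 2) (fderiv ℝ (fun w => F w / G w ^ 2) z)
        ((fun τ : ℝ => z + τ • bas a) 0) := by
      simpa [hz0] using hdiff.hasFDerivAt
    exact h2.comp_hasDerivAt 0 hline
  have hquad : HasDerivAt (fun τ : ℝ => (f2*τ^2 + f1*τ + f0) / (g2*τ^2 + g1*τ + g0) ^ 2)
      ((f1 * g0 - 2 * f0 * g1) / g0 ^ 3) 0 := by
    have hden : HasDerivAt (fun τ : ℝ => (g2*τ^2 + g1*τ + g0) ^ 2) (2 * g0 * g1) 0 := by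
      have := (hasDerivAt_quad g2 g1 g0).fun_pow 2
      simpa [mul_comm, mul_assoc, mul_left_comm] using this
    have := (hasDerivAt_quad f2 f1 f0).div hden (by simpa using pow_ne_zero 2 hg0)
    refine this.congr_deriv (Eq.symm ?_)
    simp only [ne_eq, OfNat.ofNat_ne_zero, not_false_eq_true, zero_pow, mul_zero, zero_add]
    rw [div_eq_div_iff (pow_ne_zero _ hg0) (pow_ne_zero _ (pow_ne_zero _ hg0))]
    ring
  have heq : (fun τ : ℝ => F (z + τ • bas a) / G (z + τ • bas a) ^ 2)
      = fun τ : ℝ => (f2*τ^2 + f1*τ + f0) / (g2*τ^2 + g1*τ + g0) ^ 2 := by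
    funext τ; rw [hF, hG]
  rw [heq] at hcomp
  have hu := hcomp.unique hquad
  simpa [pd] using hu

def DXf (p q r s t u : ℝ) (z : E2) : ℝ :=
  (2*r*z 0 + 2*p) * Af q r u z - 2 * Cf p q r t z * (r * z 1 + q)
def DYf (p q r s t u : ℝ) (z : E2) : ℝ :=
  (2*r*z 1 + 2*q) * Bf p r s z - 2 * Cf p q r t z * (r * z 0 + p)

@[simp] lemma bas00 : bas 0 0 = 1 := by simp [bas]
@[simp] lemma bas01 : bas 0 1 = 0 := by simp [bas, Pi.single_eq_of_ne]
@[simp] lemma bas10 : bas 1 0 = 0 := by simp [bas, Pi.single_eq_of_ne]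
@[simp] lemma bas11 : bas 1 1 = 1 := by simp [bas]

@[simp] lemma coord00 (z : E2) (τ : ℝ) : (z + τ • bas 0) 0 = z 0 + τ := by simp [bas]
@[simp] lemma coord01 (z : E2) (τ : ℝ) : (z + τ • bas 0) 1 = z 1 := by
  simp [bas, Pi.single_eq_of_ne]
@[simp] lemma coord10 (z : E2) (τ : ℝ) : (z + τ • bas 1) 0 = z 0 := by
  simp [bas, Pi.single_eq_of_ne]
@[simp] lemma coord11 (z : E2) (τ : ℝ) : (z + τ • bas 1) 1 = z 1 + τ := by simp [bas]

lemma pdA0 (p q r s t u : ℝ) (z : E2) (h : Df p q r s t u z ≠ 0) :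
    pd 0 (fun w => Af q r u w / Df p q r s t u w ^ 2) z
      = (((0:ℝ)) * Df p q r s t u z - 2 * (Af q r u z) * (DXf p q r s t u z)) / Df p q r s t u z ^ 3 := by
  refine pd_rat _ _ z 0 ((0:ℝ)) ((0:ℝ)) (Af q r u z) (r*Af q r u z - (r*z 1+q)^2) (DXf p q r s t u z) (Df p q r s t u z) ?_ ?_ h ?_ ?_
  · intro τ; simp [Af, Bf, Cf]; try ring
  · intro τ; simp [Df, Af, Bf, Cf, DXf, DYf]; try ring
  · unfold Af; fun_prop
  · unfold Df Bf Af Cf; fun_prop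

lemma pdA1 (p q r s t u : ℝ) (z : E2) (h : Df p q r s t u z ≠ 0) :
    pd 1 (fun w => Af q r u w / Df p q r s t u w ^ 2) z
      = ((2*r*z 1+2*q) * Df p q r s t u z - 2 * (Af q r u z) * (DYf p q r s t u z)) / Df p q r s t u z ^ 3 := by
  refine pd_rat _ _ z 1 (r) (2*r*z 1+2*q) (Af q r u z) (r*Bf p r s z - (r*z 0+p)^2) (DYf p q r s t u z) (Df p q r s t u z) ?_ ?_ h ?_ ?_
  · intro τ; simp [Af, Bf, Cf]; try ring
  · intro τ; simp [Df, Af, Bf, Cf, DXf, DYf]; try ring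
  · unfold Af; fun_prop
  · unfold Df Bf Af Cf; fun_prop

lemma pdB0 (p q r s t u : ℝ) (z : E2) (h : Df p q r s t u z ≠ 0) :
    pd 0 (fun w => Bf p r s w / Df p q r s t u w ^ 2) z
      = ((2*r*z 0+2*p) * Df p q r s t u z - 2 * (Bf p r s z) * (DXf p q r s t u z)) / Df p q r s t u z ^ 3 := by
  refine pd_rat _ _ z 0 (r) (2*r*z 0+2*p) (Bf p r s z) (r*Af q r u z - (r*z 1+q)^2) (DXf p q r s t u z) (Df p q r s t u z) ?_ ?_ h ?_ ?_
  · intro τ; simp [Af, Bf, Cf]; try ring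
  · intro τ; simp [Df, Af, Bf, Cf, DXf, DYf]; try ring
  · unfold Bf; fun_prop
  · unfold Df Bf Af Cf; fun_prop

lemma pdB1 (p q r s t u : ℝ) (z : E2) (h : Df p q r s t u z ≠ 0) :
    pd 1 (fun w => Bf p r s w / Df p q r s t u w ^ 2) z
      = (((0:ℝ)) * Df p q r s t u z - 2 * (Bf p r s z) * (DYf p q r s t u z)) / Df p q r s t u z ^ 3 := by
  refine pd_rat _ _ z 1 ((0:ℝ)) ((0:ℝ)) (Bf p r s z) (r*Bf p r s z - (r*z 0+p)^2) (DYf p q r s t u z) (Df p q r s t u z) ?_ ?_ h ?_ ?_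
  · intro τ; simp [Af, Bf, Cf]; try ring
  · intro τ; simp [Df, Af, Bf, Cf, DXf, DYf]; try ring
  · unfold Bf; fun_prop
  · unfold Df Bf Af Cf; fun_prop

lemma pdC0 (p q r s t u : ℝ) (z : E2) (h : Df p q r s t u z ≠ 0) :
    pd 0 (fun w => -Cf p q r t w / Df p q r s t u w ^ 2) z
      = ((-(r*z 1+q)) * Df p q r s t u z - 2 * (-Cf p q r t z) * (DXf p q r s t u z)) / Df p q r s t u z ^ 3 := by
  refine pd_rat _ _ z 0 ((0:ℝ)) (-(r*z 1+q)) (-Cf p q r t z) (r*Af q r u z - (r*z 1+q)^2) (DXf p q r s t u z) (Df p q r s t u z) ?_ ?_ h ?_ ?_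
  · intro τ; simp [Af, Bf, Cf]; try ring
  · intro τ; simp [Df, Af, Bf, Cf, DXf, DYf]; try ring
  · unfold Cf; fun_prop
  · unfold Df Bf Af Cf; fun_prop

lemma pdC1 (p q r s t u : ℝ) (z : E2) (h : Df p q r s t u z ≠ 0) :
    pd 1 (fun w => -Cf p q r t w / Df p q r s t u w ^ 2) z
      = ((-(r*z 0+p)) * Df p q r s t u z - 2 * (-Cf p q r t z) * (DYf p q r s t u z)) / Df p q r s t u z ^ 3 := by
  refine pd_rat _ _ z 1 ((0:ℝ)) (-(r*z 0+p)) (-Cf p q r t z) (r*Bf p r s z - (r*z 0+p)^2) (DYf p q r s t u z) (Df p q r s t u z) ?_ ?_ h ?_ ?_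
  · intro τ; simp [Af, Bf, Cf]; try ring
  · intro τ; simp [Df, Af, Bf, Cf, DXf, DYf]; try ring
  · unfold Cf; fun_prop
  · unfold Df Bf Af Cf; fun_prop

lemma entry00 (p q r s t u : ℝ) :
    (fun y => liouville p q r s t u y 0 0) = fun w => Af q r u w / Df p q r s t u w ^ 2 := by
  funext w; simp [liouville, Af, Bf, Cf, Df]
lemma entry01 (p q r s t u : ℝ) :
    (fun y => liouville p q r s t u y 0 1) = fun w => -Cf p q r t w / Df p q r s t u w ^ 2 := by
  funext w; simp [liouville, Af, Bf, Cf, Df]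
lemma entry10 (p q r s t u : ℝ) :
    (fun y => liouville p q r s t u y 1 0) = fun w => -Cf p q r t w / Df p q r s t u w ^ 2 := by
  funext w; simp [liouville, Af, Bf, Cf, Df]
lemma entry11 (p q r s t u : ℝ) :
    (fun y => liouville p q r s t u y 1 1) = fun w => Bf p r s w / Df p q r s t u w ^ 2 := by
  funext w; simp [liouville, Af, Bf, Cf, Df]

lemma det_liouville (p q r s t u : ℝ) (z : E2) :
    (liouville p q r s t u z).det = Df p q r s t u z / Df p q r s t u z ^ 4 := by
  rw [Matrix.det_fin_two]
  have h00 := congrFun (entry00 p q r s t u) z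
  have h01 := congrFun (entry01 p q r s t u) z
  have h10 := congrFun (entry10 p q r s t u) z
  have h11 := congrFun (entry11 p q r s t u) z
  rw [h00, h01, h10, h11]
  by_cases h : Df p q r s t u z = 0
  · rw [h]; simp
  · rw [Df] at h ⊢; field_simp

lemma posdef_ne (p q r s t u : ℝ) (z : E2) (h : (liouville p q r s t u z).PosDef) :
    Df p q r s t u z ≠ 0 := by
  intro h0
  have hd := h.det_pos
  rw [det_liouville, h0] at hd
  simp at hd

lemma inv_liouville (p q r s t u : ℝ) (z : E2) (h : Df p q r s t u z ≠ 0) :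
    (liouville p q r s t u z)⁻¹ = Matrix.of
      ![![Df p q r s t u z * Bf p r s z, Df p q r s t u z * Cf p q r t z],
        ![Df p q r s t u z * Cf p q r t z, Df p q r s t u z * Af q r u z]] := by
  apply Matrix.inv_eq_right_inv
  have h00 := congrFun (entry00 p q r s t u) z
  have h01 := congrFun (entry01 p q r s t u) z
  have h10 := congrFun (entry10 p q r s t u) z
  have h11 := congrFun (entry11 p q r s t u) z
  have h' : Af q r u z * Bf p r s z - Cf p q r t z ^ 2 ≠ 0 := by
    rw [Df, mul_comm] at h; exact h
  ext i j
  fin_cases i <;> fin_cases j <;>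
    simp [Matrix.mul_apply, Fin.sum_univ_two, h00, h01, h10, h11] <;>
    rw [Df] at h ⊢ <;> field_simp <;> ring

set_option maxHeartbeats 1000000 in
lemma chr110 (p q r s t u : ℝ) (z : E2) (h : Df p q r s t u z ≠ 0) :
    chrLC (liouville p q r s t u) 1 1 0 z = 0 := by
  simp only [chrLC, Fin.sum_univ_two, inv_liouville p q r s t u z h,
    entry00, entry01, entry10, entry11]
  simp only [Matrix.of_apply, Matrix.cons_val_zero, Matrix.cons_val_one, Matrix.head_cons]
  simp only [pdA0 p q r s t u z h, pdA1 p q r s t u z h, pdB0 p q r s t u z h,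
    pdB1 p q r s t u z h, pdC0 p q r s t u z h, pdC1 p q r s t u z h]
  rw [Df] at h
  simp only [Df, DXf, DYf]
  field_simp
  try ring

set_option maxHeartbeats 1000000 in
lemma chr001 (p q r s t u : ℝ) (z : E2) (h : Df p q r s t u z ≠ 0) :
    chrLC (liouville p q r s t u) 0 0 1 z = 0 := by
  simp only [chrLC, Fin.sum_univ_two, inv_liouville p q r s t u z h,
    entry00, entry01, entry10, entry11]
  simp only [Matrix.of_apply, Matrix.cons_val_zero, Matrix.cons_val_one, Matrix.head_cons]
  simp only [pdA0 p q r s t u z h, pdA1 p q r s t u z h, pdB0 p q r s t u z h,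
    pdB1 p q r s t u z h, pdC0 p q r s t u z h, pdC1 p q r s t u z h]
  rw [Df] at h
  simp only [Df, DXf, DYf]
  field_simp
  try ring

set_option maxHeartbeats 1000000 in
lemma chr000 (p q r s t u : ℝ) (z : E2) (h : Df p q r s t u z ≠ 0) :
    chrLC (liouville p q r s t u) 0 0 0 z = 2 * chrLC (liouville p q r s t u) 0 1 1 z := by
  simp only [chrLC, Fin.sum_univ_two, inv_liouville p q r s t u z h,
    entry00, entry01, entry10, entry11]
  simp only [Matrix.of_apply, Matrix.cons_val_zero, Matrix.cons_val_one, Matrix.head_cons]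
  simp only [pdA0 p q r s t u z h, pdA1 p q r s t u z h, pdB0 p q r s t u z h,
    pdB1 p q r s t u z h, pdC0 p q r s t u z h, pdC1 p q r s t u z h]
  rw [Df] at h
  simp only [Df, DXf, DYf]
  field_simp
  try ring

set_option maxHeartbeats 1000000 in
lemma chr111 (p q r s t u : ℝ) (z : E2) (h : Df p q r s t u z ≠ 0) :
    chrLC (liouville p q r s t u) 1 1 1 z = 2 * chrLC (liouville p q r s t u) 0 1 0 z := by
  simp only [chrLC, Fin.sum_univ_two, inv_liouville p q r s t u z h,
    entry00, entry01, entry10, entry11]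
  simp only [Matrix.of_apply, Matrix.cons_val_zero, Matrix.cons_val_one, Matrix.head_cons]
  simp only [pdA0 p q r s t u z h, pdA1 p q r s t u z h, pdB0 p q r s t u z h,
    pdB1 p q r s t u z h, pdC0 p q r s t u z h, pdC1 p q r s t u z h]
  rw [Df] at h
  simp only [Df, DXf, DYf]
  field_simp
  try ring

set_option maxHeartbeats 1000000 in
lemma chr100c0 (p q r s t u : ℝ) (z : E2) (h : Df p q r s t u z ≠ 0) :
    chrLC (liouville p q r s t u) 1 0 0 z = chrLC (liouville p q r s t u) 0 1 0 z := by
  simp only [chrLC, Fin.sum_univ_two, inv_liouville p q r s t u z h,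
    entry00, entry01, entry10, entry11]
  simp only [Matrix.of_apply, Matrix.cons_val_zero, Matrix.cons_val_one, Matrix.head_cons]
  simp only [pdA0 p q r s t u z h, pdA1 p q r s t u z h, pdB0 p q r s t u z h,
    pdB1 p q r s t u z h, pdC0 p q r s t u z h, pdC1 p q r s t u z h]
  rw [Df] at h
  simp only [Df, DXf, DYf]
  field_simp
  try ring

set_option maxHeartbeats 1000000 in
lemma chr100c1 (p q r s t u : ℝ) (z : E2) (h : Df p q r s t u z ≠ 0) :
    chrLC (liouville p q r s t u) 1 0 1 z = chrLC (liouville p q r s t u) 0 1 1 z := by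
  simp only [chrLC, Fin.sum_univ_two, inv_liouville p q r s t u z h,
    entry00, entry01, entry10, entry11]
  simp only [Matrix.of_apply, Matrix.cons_val_zero, Matrix.cons_val_one, Matrix.head_cons]
  simp only [pdA0 p q r s t u z h, pdA1 p q r s t u z h, pdB0 p q r s t u z h,
    pdB1 p q r s t u z h, pdC0 p q r s t u z h, pdC1 p q r s t u z h]
  rw [Df] at h
  simp only [Df, DXf, DYf]
  field_simp
  try ring

lemma contraction_mem (p q r s t u : ℝ) (z : E2) (h : (liouville p q r s t u z).PosDef)
    (v : E2) :
    (fun c => ∑ i, ∑ j, chrLC (liouville p q r s t u) i j c z * v i * v j)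
      ∈ Submodule.span ℝ {v} := by
  have hΔ := posdef_ne p q r s t u z h
  have key : (fun c => ∑ i, ∑ j, chrLC (liouville p q r s t u) i j c z * v i * v j)
      = (2 * (chrLC (liouville p q r s t u) 0 1 1 z * v 0
          + chrLC (liouville p q r s t u) 0 1 0 z * v 1)) • v := by
    funext c
    fin_cases c <;>
      simp only [Fin.mk_zero, Fin.mk_one, Fin.sum_univ_two, Pi.smul_apply, smul_eq_mul, Fin.isValue,
        chr110 p q r s t u z hΔ, chr001 p q r s t u z hΔ, chr000 p q r s t u z hΔ,
        chr111 p q r s t u z hΔ, chr100c0 p q r s t u z hΔ, chr100c1 p q r s t u z hΔ] <;>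
      ring
  rw [key]
  exact Submodule.smul_mem _ _ (Submodule.mem_span_singleton_self v)

theorem stmt_14 (p q r s t u : ℝ) :
    ∀ (a b : ℝ) (γ : ℝ → E2), ContDiffOn ℝ (⊤ : ℕ∞) γ (Set.Ioo a b) →
      (∀ τ ∈ Set.Ioo a b, γ τ ∈ {z : E2 | (liouville p q r s t u z).PosDef}) →
      (∀ τ ∈ Set.Ioo a b, deriv γ τ ≠ 0) →
      (∀ τ ∈ Set.Ioo a b,
        deriv (deriv γ) τ
          + (fun c => ∑ i, ∑ j,
              chrLC (liouville p q r s t u) i j c (γ τ) * deriv γ τ i * deriv γ τ j)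
          ∈ Submodule.span ℝ {deriv γ τ}) →
      ∃ (pt v : E2), v ≠ 0 ∧ ∀ τ ∈ Set.Ioo a b, ∃ σ : ℝ, γ τ = pt + σ • v := by
  intro a b γ hγ hpos hvne hgeo
  rcases le_or_gt b a with hba | hab
  · refine ⟨0, bas 0, ?_, fun τ hτ => ?_⟩
    · intro h0
      have := congrFun h0 0
      rw [bas00] at this
      simp at this
    · rw [Set.Ioo_eq_empty (not_lt.2 hba)] at hτ
      exact absurd hτ (Set.notMem_empty τ)
  · apply lines hγ hab hvne
    intro τ hτ
    have hT := contraction_mem p q r s t u (γ τ) (hpos τ hτ) (deriv γ τ)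
    have hsub := Submodule.sub_mem _ (hgeo τ hτ) hT
    simpa using hsub
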